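/- Let ε > 0, M > 0, let V ∈ C¹([-M, M]) and u ∈ C²([-M, M]) satisfy ε²u''(t) = V(t)u(t) - u(t)³ for all t ∈ [-M, M]. Then ε²(u'(M)² - u'(-M)²) + ∫_{-M}^{M} V'(t)u(t)² dt = [V(M)u(M)² - V(-M)u(-M)²] - (1/2)[u(M)⁴ - u(-M)⁴]. -/

import Mathlib

theorem stmt15 (ε M : ℝ) (hε : 0 < ε) (hM : 0 < M)
    (V V' u u' u'' : ℝ → ℝ)
    (hV : ∀ t ∈ Set.Icc (-M) M, HasDerivAt V (V' t) t)
    (hV' : ContinuousOn V' (Set.Icc (-M) M))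
    (hu : ∀ t ∈ Set.Icc (-M) M, HasDerivAt u (u' t) t)
    (hu' : ∀ t ∈ Set.Icc (-M) M, HasDerivAt u' (u'' t) t)
    (hu'' : ContinuousOn u'' (Set.Icc (-M) M))
    (heq : ∀ t ∈ Set.Icc (-M) M, ε ^ 2 * u'' t = V t * u t - (u t) ^ 3) :
    ε ^ 2 * ((u' M) ^ 2 - (u' (-M)) ^ 2) + (∫ t in (-M)..M, V' t * (u t) ^ 2)
      = (V M * (u M) ^ 2 - V (-M) * (u (-M)) ^ 2)
        - (1 / 2) * ((u M) ^ 4 - (u (-M)) ^ 4) := by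
  have hMM : -M ≤ M := by linarith
  have huIcc : Set.uIcc (-M) M = Set.Icc (-M) M := Set.uIcc_of_le hMM
  set G : ℝ → ℝ := fun t => ε ^ 2 * (u' t) ^ 2 - V t * (u t) ^ 2 + (1/2) * (u t) ^ 4
    with hG
  have hderiv : ∀ t ∈ Set.uIcc (-M) M, HasDerivAt G (-(V' t * (u t) ^ 2)) t := by
    intro t ht
    rw [huIcc] at ht
    have h1 := (hu' t ht)
    have h2 := (hu t ht)
    have h3 := (hV t ht)
    have : HasDerivAt G
        (ε ^ 2 * (2 * u' t * u'' t) - (V' t * (u t) ^ 2 + V t * (2 * u t * u' t))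
          + (1/2) * (4 * (u t) ^ 3 * u' t)) t := by
      apply HasDerivAt.add
      apply HasDerivAt.sub
      · simpa using ((h1.pow 2).const_mul (ε ^ 2))
      · have h4 : HasDerivAt (fun t => V t * u t ^ 2) _ t := h3.mul (h2.pow 2)
        simpa [mul_comm, mul_assoc, mul_left_comm] using h4
      · simpa using ((h2.pow 4).const_mul (1/2 : ℝ))
    convert this using 1
    have he := heq t ht
    linear_combination (-2 * u' t) * he
  have hcontu : ContinuousOn u (Set.Icc (-M) M) := fun t ht =>
    (hu t ht).continuousAt.continuousWithinAt
  have hint : IntervalIntegrable (fun t => -(V' t * (u t) ^ 2)) MeasureTheory.volume (-M) M := by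
    apply ContinuousOn.intervalIntegrable
    rw [huIcc]
    exact ((hV'.mul (hcontu.pow 2)).neg)
  have hFTC := intervalIntegral.integral_eq_sub_of_hasDerivAt hderiv hint
  have hneg : ∫ t in (-M)..M, -(V' t * (u t) ^ 2) = -∫ t in (-M)..M, V' t * (u t) ^ 2 := by
    simp [intervalIntegral.integral_neg]
  rw [hneg] at hFTC
  simp only [hG] at hFTC
  linarith
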